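/- arXiv:1912.05368 — 3 statements merged into one kernel-verified Lean document; each statement's English description precedes it below -/
import Mathlib

section
/- Let q ≠ 0, q² ≠ 1 in a field, let a ∈ ℤ with a ≤ 0, and c a scalar. Define, for s ∈ {0,1}, the coefficients α^{(s)}_{k,N} = ∑_{1−s ≤ ℓ_1 < ℓ_2 < ... < ℓ_k ≤ N} [2ℓ_1+s]_q² [2ℓ_2+s]_q² ⋯ [2ℓ_k+s]_q² (with α^{(s)}_{0,N} = 1 and α^{(s)}_{k,N} = 0 if k > N+s or k < 0). Then the ι-divided power B^{(r)}_{i,s} = (B^{r_p}/[r]_q!) ∏_{k=1}^{r_e} (B² + q c [2(k−1+r_p(1−s)) + s]_q²) — equivalently B^{(r)}_{i,1} = (B^{r_p}/[r]_q!) ∏_{k=1}^{r_e}(B² + qc[2k−1]_q²) and B^{(r)}_{i,0} = (B^{r_p}/[r]_q!) ∏_{k=1}^{r_e}(B² + qc[2(k−1+r_p)]_q²) — expands as B^{(r)}_{i,s} = (1/[r]_q!) ∑_{k=0}^{r_e} (qc)^k α^{(s)}_{k, r_e + r_p(1−s) − 1} B^{r−2k}, where r = 2 r_e + r_p with r_p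 ∈ {0,1}. -/
open Finset

/-- The balanced `q`-number `[m]_q = (q^m - q^{-m})/(q - q⁻¹)`. -/
noncomputable def qNum {K : Type*} [Field K] (q : K) (m : ℤ) : K :=
  (q ^ m - q ^ (-m)) / (q - q⁻¹)

/-- The `q`-factorial `[n]_q!`. -/
noncomputable def qFact {K : Type*} [Field K] (q : K) (n : ℕ) : K :=
  ∏ ℓ ∈ Finset.range n, qNum q (ℓ + 1)

/-- The coefficient `α^{(s)}_{k,N} = ∑_{1−s ≤ ℓ_1 < ⋯ < ℓ_k ≤ N} [2ℓ_1+s]_q² ⋯ [2ℓ_k+s]_q²`,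
encoded as a sum over `k`-element subsets of `{1−s, …, N} ⊆ ℤ`; it equals `1` for `k = 0`
and `0` when `k > N + s`. -/
noncomputable def alphaC {K : Type*} [Field K] (q : K) (s k : ℕ) (N : ℤ) : K :=
  ∑ S ∈ (Finset.Icc (1 - (s : ℤ)) N).powersetCard k,
    ∏ ℓ ∈ S, (qNum q (2 * ℓ + s)) ^ 2

/-! The product `∏ₖ (B² + qc[2ℓₖ+s]²)`, with `ℓₖ = k + r_p(1−s)`, is the image under
`aeval (B²)` of `∏ₖ (X + qc[2ℓₖ+s]²)`, so by Vieta its coefficients are the elementary symmetric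
functions of the numbers `qc[2ℓₖ+s]²`, i.e. `(qc)ʲ α^{(s)}_j`. The index set `{ℓₖ}` is the
interval of `α^{(s)}` except when `s = r_p = 0`, where it has the extra index `ℓ = 0`, whose
factor `[0]_q² = 0` does not contribute. -/

open Polynomial

theorem List.prod_map_add_algebraMap_eq_sum_esymm {K R : Type*} [CommSemiring K] [Semiring R]
    [Algebra K R] (x : R) (l : List K) :
    (l.map fun a => x + algebraMap K R a).prod =
      ∑ j ∈ Finset.range (l.length + 1), (l : Multiset K).esymm j • x ^ (l.length - j) := by
  have := congrArg (aeval x) (Multiset.prod_X_add_C_eq_sum_esymm (l : Multiset K))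
  rw [Multiset.map_coe, Multiset.prod_coe, map_list_prod, List.map_map, map_sum] at this
  simpa [Function.comp_def, Algebra.smul_def] using this

theorem Finset.sum_powersetCard_prod_eq_of_subset {ι M : Type*} [CommSemiring M]
    {s t : Finset ι} (hst : s ⊆ t) {f : ι → M} (hf : ∀ i ∈ t, i ∉ s → f i = 0) (n : ℕ) :
    ∑ U ∈ s.powersetCard n, ∏ i ∈ U, f i = ∑ U ∈ t.powersetCard n, ∏ i ∈ U, f i := by
  refine sum_subset (powersetCard_mono hst) fun U hUt hUs => ?_
  obtain ⟨hUt, hcard⟩ := mem_powersetCard.1 hUt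
  obtain ⟨i, hiU, his⟩ := not_subset.1 fun h => hUs (mem_powersetCard.2 ⟨h, hcard⟩)
  exact prod_eq_zero hiU (hf i (hUt hiU) his)

theorem map_range_natCast_add_eq_Icc (t : ℤ) (n : ℕ) :
    (Multiset.range n).map (fun k : ℕ => (k : ℤ) + t) = (Icc t (n + t - 1)).val := by
  have hinj : Function.Injective fun k : ℕ => (k : ℤ) + t := fun a b h => by simpa using h
  have : (range n).map ⟨_, hinj⟩ = Icc t (n + t - 1) := by
    ext x
    simp only [mem_map, mem_range, Function.Embedding.coeFn_mk, mem_Icc]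
    constructor
    · rintro ⟨k, hk, rfl⟩
      omega
    · exact fun h => ⟨(x - t).toNat, by omega, by omega⟩
  exact congrArg Finset.val this

theorem qNum_zero {K : Type*} [Field K] (q : K) : qNum q 0 = 0 := by
  simp [qNum]

theorem alphaC_eq_esymm {K : Type*} [Field K] (q : K) (s k : ℕ) (t : ℤ) (n : ℕ) (ht : 0 ≤ t)
    (hts : t + s ≤ 1) :
    alphaC q s k (n + t - 1) =
      ((Multiset.range n).map fun i : ℕ => qNum q (2 * ((i : ℤ) + t) + s) ^ 2).esymm k := by
  have hvanish : ∀ ℓ ∈ Icc t (n + t - 1), ℓ ∉ Icc (1 - (s : ℤ)) (n + t - 1) →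
      qNum q (2 * ℓ + s) ^ 2 = 0 := by
    intro ℓ hℓ hℓ'
    simp only [mem_Icc] at hℓ hℓ'
    rw [show 2 * ℓ + s = 0 by omega, qNum_zero, zero_pow two_ne_zero]
  rw [alphaC, sum_powersetCard_prod_eq_of_subset (Icc_subset_Icc_left (by omega)) hvanish,
    ← esymm_map_val, ← map_range_natCast_add_eq_Icc, Multiset.map_map]
  rfl

theorem prod_map_sq_add_qNum_eq_sum_alphaC {K : Type*} [Field K] {R : Type*} [Ring R]
    [Algebra K R] (q c : K) (B : R) (s : ℕ) (t : ℤ) (n : ℕ) (ht : 0 ≤ t) (hts : t + s ≤ 1) :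
    ((List.range n).map fun k : ℕ =>
        B ^ 2 + algebraMap K R (q * c * qNum q (2 * ((k : ℤ) + t) + s) ^ 2)).prod =
      ∑ j ∈ range (n + 1), ((q * c) ^ j * alphaC q s j (n + t - 1)) • (B ^ 2) ^ (n - j) := by
  have h := List.prod_map_add_algebraMap_eq_sum_esymm (B ^ 2)
    ((List.range n).map fun k : ℕ => q * c * qNum q (2 * ((k : ℤ) + t) + s) ^ 2)
  simp only [List.map_map, List.length_map, List.length_range, Function.comp_def] at h
  rw [h]
  refine sum_congr rfl fun j _ => ?_
  congr 1
  rw [alphaC_eq_esymm q s j t n ht hts, ← smul_eq_mul ((q * c) ^ j), Multiset.pow_smul_esymm,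
    Multiset.map_map]
  rfl

theorem iota_divided_power_expansion_general {K : Type*} [Field K] {R : Type*} [Ring R]
    [Algebra K R] (q c : K) (B : R) (s : ℕ) (hs : s ≤ 1) (r re rp : ℕ) (hrp : rp ≤ 1) (hr : r = 2 * re + rp) :
    (qFact q r)⁻¹ •
        (B ^ rp *
          ((List.range re).map (fun k =>
            B ^ 2 + algebraMap K R
              (q * c * (qNum q (2 * ((k : ℤ) + rp * (1 - (s : ℤ))) + s)) ^ 2))).prod)
      = (qFact q r)⁻¹ •
          ∑ k ∈ Finset.range (re + 1),
            ((q * c) ^ k * alphaC q s k ((re : ℤ) + rp * (1 - (s : ℤ)) - 1))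
              • B ^ (r - 2 * k) := by
  obtain ⟨ht, hts⟩ : 0 ≤ (rp : ℤ) * (1 - s) ∧ (rp : ℤ) * (1 - s) + s ≤ 1 := by
    interval_cases s <;> interval_cases rp <;> norm_num
  -- the statement's `List.range re` has been lifted to a `List ℤ` by a monadic coercion
  simp only [bind_pure_comp, List.map_eq_map, List.map_map, Function.comp_def]
  rw [prod_map_sq_add_qNum_eq_sum_alphaC q c B s _ re ht hts, mul_sum]
  congr 1
  refine sum_congr rfl fun k hk => ?_
  rw [mul_smul_comm, ← pow_mul, ← pow_add, hr]
  congr 2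
  have := mem_range.1 hk
  omega

/-- Lemma 4.2: expansion of the ι-divided powers.  With `r = 2 r_e + r_p`,
`r_p ∈ {0,1}`, and `s ∈ {0,1}`, the ι-divided power
`B^{(r)}_{i,s} = (B^{r_p}/[r]_q!) ∏_{k=1}^{r_e} (B² + q c [2(k−1+r_p(1−s))+s]_q²)`
equals `(1/[r]_q!) ∑_{k=0}^{r_e} (qc)^k α^{(s)}_{k, r_e + r_p(1−s) − 1} B^{r−2k}`. -/
theorem iota_divided_power_expansion {K : Type*} [Field K] {R : Type*} [Ring R]
    [Algebra K R] (q c : K) (hq : q ≠ 0) (hroot : ∀ n : ℕ, 0 < n → q ^ n ≠ 1)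
    (B : R) (s : ℕ) (hs : s ≤ 1) (r re rp : ℕ) (hrp : rp ≤ 1) (hr : r = 2 * re + rp) :
    (qFact q r)⁻¹ •
        (B ^ rp *
          ((List.range re).map (fun k =>
            B ^ 2 + algebraMap K R
              (q * c * (qNum q (2 * ((k : ℤ) + rp * (1 - (s : ℤ))) + s)) ^ 2))).prod)
      = (qFact q r)⁻¹ •
          ∑ k ∈ Finset.range (re + 1),
            ((q * c) ^ k * alphaC q s k ((re : ℤ) + rp * (1 - (s : ℤ)) - 1))
              • B ^ (r - 2 * k) :=
  iota_divided_power_expansion_general q c B s hs r re rp hrp hr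
end

section
/- For integers a ≤ 0 with a odd and naturals m, m' of equal parity with m+m' ≤ −1−a, one has the identity ∑_{r=0}^{R} [1−a choose m'+2r]_q α^{(0)}_{r, r+m'_e+m'_p−1} α^{(1)}_{R−r, (−a−1)/2 − r − m'_e − m'_p} = ∑_{r=0}^{R} [1−a choose m+2r]_q α^{(1)}_{r, r+m_e−1} α^{(0)}_{R−r, −a_e − r − m_e − 1}, where R = (1−a−m−m')/2, α^{(s)}_{k,N} = ∑_{1−s ≤ ℓ_1 < ... < ℓ_k ≤ N} [2ℓ_1+s]_q² ⋯ [2ℓ_k+s]_q², and d_e, d_p denote ⌊d/2⌋ and the parity of d. -/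
open Finset

noncomputable def qBinom {K : Type*} [Field K] (q : K) (N m : ℕ) : K :=
  qFact q N / (qFact q m * qFact q (N - m))

/-! After the substitution `r ↦ R − r` in the right-hand side, the two sums agree term by term:
the `q`-binomials are exchanged by `[N choose k]_q = [N choose N−k]_q` (as `m + m' + 2R = 1 − a`), and
the ranges of the `α`-coefficients coincide because `m ≡ m' (mod 2)`. -/

theorem qBinom_sub_self {K : Type*} [Field K] (q : K) {N k : ℕ} (hk : k ≤ N) :
    qBinom q N (N - k) = qBinom q N k := by
  rw [qBinom, qBinom, Nat.sub_sub_self hk, mul_comm]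

theorem qBinom_add_two_mul_sub_eq {K : Type*} [Field K] (q : K) {N R m m' r : ℕ}
    (hN : m + m' + 2 * R = N) (hr : r ≤ R) :
    qBinom q N (m + 2 * (R - r)) = qBinom q N (m' + 2 * r) := by
  rw [show m + 2 * (R - r) = N - (m' + 2 * r) by omega, qBinom_sub_self q (by omega)]

theorem symmetry_q_binomial_identity_general {K : Type*} [Field K] (q : K) (a : ℤ) (haodd : Odd a)
    (m m' : ℕ) (hpar : m % 2 = m' % 2) (hmm : (m : ℤ) + (m' : ℤ) ≤ -1 - a) :
    (∑ r ∈ Finset.range (((1 - a - (m : ℤ) - (m' : ℤ)) / 2).toNat + 1),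
        qBinom q (1 - a).toNat (m' + 2 * r)
          * alphaC q 0 r (((m' / 2 + m' % 2 : ℕ) : ℤ) + r - 1)
          * alphaC q 1 (((1 - a - (m : ℤ) - (m' : ℤ)) / 2).toNat - r)
              ((-a - 1) / 2 - (r : ℤ) - ((m' / 2 : ℕ) : ℤ) - ((m' % 2 : ℕ) : ℤ)))
      = ∑ r ∈ Finset.range (((1 - a - (m : ℤ) - (m' : ℤ)) / 2).toNat + 1),
          qBinom q (1 - a).toNat (m + 2 * r)
            * alphaC q 1 r (((m / 2 : ℕ) : ℤ) + r - 1)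
            * alphaC q 0 (((1 - a - (m : ℤ) - (m' : ℤ)) / 2).toNat - r)
                (-(a / 2) - (r : ℤ) - ((m / 2 : ℕ) : ℤ) - 1) := by
  obtain ⟨t, rfl⟩ := haodd
  set R : ℕ := ((1 - (2 * t + 1) - (m : ℤ) - (m' : ℤ)) / 2).toNat
  have h2R : 2 * (R : ℤ) = 1 - (2 * t + 1) - m - m' := by omega
  conv_rhs => rw [← sum_range_reflect]
  refine sum_congr rfl fun r hr => ?_
  have hrR : r ≤ R := by rw [mem_range] at hr; omega
  have hα₁ : ((m / 2 : ℕ) : ℤ) + ((R - r : ℕ) : ℤ) - 1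
      = (-(2 * t + 1) - 1) / 2 - r - ((m' / 2 : ℕ) : ℤ) - ((m' % 2 : ℕ) : ℤ) := by omega
  have hα₀ : -((2 * t + 1) / 2) - ((R - r : ℕ) : ℤ) - ((m / 2 : ℕ) : ℤ) - 1
      = ((m' / 2 + m' % 2 : ℕ) : ℤ) + r - 1 := by omega
  rw [show R + 1 - 1 - r = R - r by omega, show R - (R - r) = r by omega, hα₁, hα₀,
    qBinom_add_two_mul_sub_eq q (m := m) (m' := m') (N := (1 - (2 * t + 1)).toNat)
      (by omega) hrR]
  ring

/-- the concrete `q`-binomial identity underlying the symmetry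
`ρ_{m,m'} = ρ_{m',m}` for `a` odd: with `R = (1−a−m−m')/2`,
`∑_{r=0}^{R} [1−a choose m'+2r]_q α^{(0)}_{r, r+m'_e+m'_p−1} α^{(1)}_{R−r, (−a−1)/2−r−m'_e−m'_p}
 = ∑_{r=0}^{R} [1−a choose m+2r]_q α^{(1)}_{r, r+m_e−1} α^{(0)}_{R−r, −a_e−r−m_e−1}`. -/
theorem symmetry_q_binomial_identity {K : Type*} [Field K] (q : K) (hq : q ≠ 0)
    (hroot : ∀ n : ℕ, 0 < n → q ^ n ≠ 1) (a : ℤ) (ha : a ≤ 0) (haodd : Odd a)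
    (m m' : ℕ) (hpar : m % 2 = m' % 2) (hmm : (m : ℤ) + (m' : ℤ) ≤ -1 - a) :
    (∑ r ∈ Finset.range (((1 - a - (m : ℤ) - (m' : ℤ)) / 2).toNat + 1),
        qBinom q (1 - a).toNat (m' + 2 * r)
          * alphaC q 0 r (((m' / 2 + m' % 2 : ℕ) : ℤ) + r - 1)
          * alphaC q 1 (((1 - a - (m : ℤ) - (m' : ℤ)) / 2).toNat - r)
              ((-a - 1) / 2 - (r : ℤ) - ((m' / 2 : ℕ) : ℤ) - ((m' % 2 : ℕ) : ℤ)))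
      = ∑ r ∈ Finset.range (((1 - a - (m : ℤ) - (m' : ℤ)) / 2).toNat + 1),
          qBinom q (1 - a).toNat (m + 2 * r)
            * alphaC q 1 r (((m / 2 : ℕ) : ℤ) + r - 1)
            * alphaC q 0 (((1 - a - (m : ℤ) - (m' : ℤ)) / 2).toNat - r)
                (-(a / 2) - (r : ℤ) - ((m / 2 : ℕ) : ℤ) - 1) :=
  symmetry_q_binomial_identity_general q a haodd m m' hpar hmm
end

section
/- Define c^{(b)}_{a,N} = ∑_{0 ≤ p_1 ≤ p_2 ≤ ... ≤ p_{b−a}, each p_r ≤ a'} ∏_{r=1}^{b−a} γ(N_0 − a' + p_r, |N|_{0; b−p_r−r+1} − (b−p_r−r)) — where a' is the lower index, N = (N_0,...,N_{b+1}) is a tuple of naturals, |N|_{0;p} = N_0 + ... + N_p, γ is any function of two arguments valued in a commutative ring, and c^{(a')}_{a',N} = 1. Then for tuples N' = (N_0−1, N_1+N_2, N_3, ..., N_{T+1}) and N'' = (N_0, N_1+N_2−1, N_3, ..., N_{T+1}) one has: (i) c^{(T)}_{0,N} = c^{(T−1)}_{0,N''} · γ(N_0, N_0+N_1), and (ii)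 c^{(T)}_{u,N} = c^{(T−1)}_{u−1,N'} + γ(N_0, N_0+N_1) · c^{(T−1)}_{u,N''} for 1 ≤ u ≤ T−1. -/
/-!
Write `c^{(b)}_{a,N}` as a sum, over weakly increasing `p : Fin (b - a) → Fin (a + 1)`, of
products `∏_r F(p_r, r)` whose factors depend only on `(p_r, r)`. Splitting according to whether
the last entry of `p` is maximal gives the Pascal-type recursion
`S(m+1, a+1) = S(m+1, a) + S(m, a+1) · F(a+1, m)`, while for `a = 0` the sum is a single product
from which the last factor is peeled off. The peeled factor is `γ(N_0, N_0 + N_1)`. Every other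
factor for `N` equals the corresponding one for `N'` or `N''`: merging `N_1` and `N_2` turns each
partial sum `|N|_{0;k+1}` (`k ≥ 1`) into `|N'|_{0;k} = |N''|_{0;k} = |N|_{0;k+1} - 1`, and this
shift is compensated by lowering `b` by one.
-/

open Finset

/-- The nested-sum coefficient
`c^{(b)}_{a,N} = ∑_{0 ≤ p_1 ≤ ⋯ ≤ p_{b−a} ≤ a} ∏_{r=1}^{b−a}
γ(N_0 − a + p_r, |N|_{0; b−p_r−r+1} − (b−p_r−r))`, where `|N|_{0;p} = N_0 + ⋯ + N_p`;
for `b ≤ a` this is the empty sum convention `c^{(a)}_{a,N} = 1`.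
Weakly increasing tuples `(p_1, …, p_{b−a})` with entries in `{0, …, a}` are encoded as
monotone functions `Fin (b−a) → Fin (a+1)` (0-based index `r₀ = r − 1`). -/
noncomputable def cCoeff {R : Type*} [CommRing R] (γ : ℤ → ℤ → R) (N : ℕ → ℤ)
    (a b : ℕ) : R :=
  ∑ p ∈ Finset.univ.filter (fun p : Fin (b - a) → Fin (a + 1) =>
      ∀ i j, i ≤ j → p i ≤ p j),
    ∏ r : Fin (b - a),
      γ (N 0 - (a : ℤ) + ((p r : ℕ) : ℤ))
        ((∑ i ∈ Finset.range (b - (p r : ℕ) - (r : ℕ) + 1), N i)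
          - ((b : ℤ) - ((p r : ℕ) : ℤ) - ((r : ℕ) : ℤ) - 1))

def monotoneTuples (m k : ℕ) : Finset (Fin m → Fin k) :=
  univ.filter fun p => ∀ i j, i ≤ j → p i ≤ p j

@[simp] lemma mem_monotoneTuples {m k : ℕ} {p : Fin m → Fin k} :
    p ∈ monotoneTuples m k ↔ Monotone p := by
  simp [monotoneTuples, Monotone]

lemma monotone_snoc_last {m a : ℕ} {q : Fin m → Fin (a + 1)} (hq : Monotone q) :
    Monotone (Fin.snoc q (Fin.last a) : Fin (m + 1) → Fin (a + 1)) := by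
  intro i j hij
  induction j using Fin.lastCases with
  | last => simpa using Fin.le_last _
  | cast j =>
    induction i using Fin.lastCases with
    | last => exact absurd hij (Fin.castSucc_lt_last j).not_ge
    | cast i => simpa using hq (Fin.castSucc_le_castSucc_iff.1 hij)

lemma sum_monotoneTuples_filter_last_ne {M : Type*} [AddCommMonoid M] {m a : ℕ}
    (f : (Fin (m + 1) → Fin (a + 2)) → M) :
    ∑ p ∈ (monotoneTuples (m + 1) (a + 2)).filter
        (fun p => p (Fin.last m) ≠ Fin.last (a + 1)), f p =
      ∑ q ∈ monotoneTuples (m + 1) (a + 1), f (Fin.castSucc ∘ q) := by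
  have castSucc_predAbove : ∀ p ∈ (monotoneTuples (m + 1) (a + 2)).filter
      (fun p => p (Fin.last m) ≠ Fin.last (a + 1)),
      Fin.castSucc ∘ (Fin.last a).predAbove ∘ p = p := by
    intro p hp
    simp only [mem_filter, mem_monotoneTuples] at hp
    funext r
    have hr : p r ≠ Fin.last (a + 1) :=
      ((hp.1 (Fin.le_last r)).trans_lt (Fin.lt_last_iff_ne_last.2 hp.2)).ne
    simp [hr]
  refine sum_nbij' (fun p => (Fin.last a).predAbove ∘ p) (Fin.castSucc ∘ ·) ?_ ?_
    castSucc_predAbove ?_ ?_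
  · intro p hp
    simp only [mem_filter, mem_monotoneTuples] at hp
    simpa using (Fin.predAbove_right_monotone _).comp hp.1
  · intro q hq
    simp only [mem_filter, mem_monotoneTuples] at hq ⊢
    exact ⟨Fin.strictMono_castSucc.monotone.comp hq, (Fin.castSucc_lt_last _).ne⟩
  · intro q _
    funext r
    simp
  · intro p hp
    rw [castSucc_predAbove p hp]

lemma sum_monotoneTuples_filter_last_eq {M : Type*} [AddCommMonoid M] {m a : ℕ}
    (f : (Fin (m + 1) → Fin (a + 1)) → M) :
    ∑ p ∈ (monotoneTuples (m + 1) (a + 1)).filter (fun p => p (Fin.last m) = Fin.last a), f p =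
      ∑ q ∈ monotoneTuples m (a + 1), f (Fin.snoc q (Fin.last a)) := by
  have snoc_init : ∀ p ∈ (monotoneTuples (m + 1) (a + 1)).filter
      (fun p => p (Fin.last m) = Fin.last a), Fin.snoc (Fin.init p) (Fin.last a) = p := by
    intro p hp
    simp only [mem_filter] at hp
    rw [← hp.2, Fin.snoc_init_self]
  refine sum_nbij' Fin.init (fun q => Fin.snoc q (Fin.last a)) ?_ ?_ snoc_init ?_ ?_
  · intro p hp
    simp only [mem_filter, mem_monotoneTuples] at hp
    exact mem_monotoneTuples.2 (hp.1.comp Fin.strictMono_castSucc.monotone)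
  · intro q hq
    simp only [mem_monotoneTuples] at hq
    simpa using monotone_snoc_last hq
  · intro q _
    exact Fin.init_snoc _ _
  · intro p hp
    rw [snoc_init p hp]

lemma sum_monotoneTuples_succ_succ {M : Type*} [AddCommMonoid M] {m a : ℕ}
    (f : (Fin (m + 1) → Fin (a + 2)) → M) :
    ∑ p ∈ monotoneTuples (m + 1) (a + 2), f p =
      ∑ q ∈ monotoneTuples (m + 1) (a + 1), f (Fin.castSucc ∘ q) +
      ∑ q ∈ monotoneTuples m (a + 2), f (Fin.snoc q (Fin.last (a + 1))) := by
  rw [← sum_filter_not_add_sum_filter _ (fun p => p (Fin.last m) = Fin.last (a + 1)),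
    sum_monotoneTuples_filter_last_ne, sum_monotoneTuples_filter_last_eq]

def sumMonotoneProd {R : Type*} [CommSemiring R] (m a : ℕ) (F : ℕ → ℕ → R) : R :=
  ∑ p ∈ monotoneTuples m (a + 1), ∏ r, F (p r) r

section sumMonotoneProd

variable {R : Type*} [CommSemiring R] {m a : ℕ} {F G : ℕ → ℕ → R}

lemma sumMonotoneProd_congr (h : ∀ p ≤ a, ∀ r < m, F p r = G p r) :
    sumMonotoneProd m a F = sumMonotoneProd m a G :=
  sum_congr rfl fun _ _ => prod_congr rfl fun r _ => h _ (Fin.is_le _) _ r.isLt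

lemma sumMonotoneProd_succ_zero :
    sumMonotoneProd (m + 1) 0 F = sumMonotoneProd m 0 F * F 0 m := by
  have univ_eq : ∀ n, monotoneTuples n 1 = univ := fun n =>
    eq_univ_of_forall fun _ => mem_monotoneTuples.2 fun _ _ _ => (Subsingleton.elim _ _).le
  simp [sumMonotoneProd, univ_eq, Fin.prod_univ_castSucc]

lemma sumMonotoneProd_succ_succ :
    sumMonotoneProd (m + 1) (a + 1) F =
      sumMonotoneProd (m + 1) a F + sumMonotoneProd m (a + 1) F * F (a + 1) m := by
  rw [sumMonotoneProd, sum_monotoneTuples_succ_succ, sumMonotoneProd, sumMonotoneProd, sum_mul]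
  congr 1
  refine sum_congr rfl fun q _ => ?_
  simp [Fin.prod_univ_castSucc]

end sumMonotoneProd

lemma sum_range_add_two_of_merge {G : Type*} [AddCommGroup G] {M N : ℕ → G} {c : G}
    (h01 : M 0 + M 1 = N 0 + N 1 + N 2 - c) (hM : ∀ i, M (i + 2) = N (i + 3)) (k : ℕ) :
    ∑ i ∈ range (k + 2), M i = ∑ i ∈ range (k + 3), N i - c := by
  induction k with
  | zero => simp [sum_range_succ, h01]
  | succ k ih =>
    rw [sum_range_succ, ih, hM, sum_range_succ _ (k + 3)]
    abel

noncomputable def cFactor {R : Type*} [CommRing R] (γ : ℤ → ℤ → R) (N : ℕ → ℤ)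
    (a b p r : ℕ) : R :=
  γ (N 0 - a + p) ((∑ i ∈ range (b - p - r + 1), N i) - (b - p - r - 1))

lemma cCoeff_eq_sumMonotoneProd {R : Type*} [CommRing R] (γ : ℤ → ℤ → R) (N : ℕ → ℤ)
    (a b : ℕ) : cCoeff γ N a b = sumMonotoneProd (b - a) a (cFactor γ N a b) :=
  rfl

section cFactor

variable {R : Type*} [CommRing R] (γ : ℤ → ℤ → R)

lemma cFactor_merge {M N : ℕ → ℤ} {a a' b p r : ℕ} (h0 : M 0 - a' = N 0 - a)
    (h01 : M 0 + M 1 = N 0 + N 1 + N 2 - 1) (hM : ∀ i, M (i + 2) = N (i + 3))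
    (hpr : p + r + 1 ≤ b) : cFactor γ M a' b p r = cFactor γ N a (b + 1) p r := by
  obtain ⟨k, hk⟩ : ∃ k, b - p - r = k + 1 := ⟨b - p - r - 1, by omega⟩
  rw [cFactor, cFactor, hk, show b + 1 - p - r = k + 2 by omega,
    sum_range_add_two_of_merge h01 hM, h0]
  congr 1
  push_cast
  ring

lemma cFactor_last {N : ℕ → ℤ} {a b m : ℕ} (h : a + m + 1 = b) :
    cFactor γ N a b a m = γ (N 0) (N 0 + N 1) := by
  subst h
  simp only [cFactor, show a + m + 1 - a - m + 1 = 2 by omega, sum_range_succ, range_one,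
    sum_singleton]
  congr 1
  · ring
  · push_cast
    ring

end cFactor

/-- the recursion identities (3.37) and (3.38) for the nested sums
`c^{(b)}_{a,N}`, for an arbitrary function `γ` valued in a commutative ring.  With
`N = (N_0, …, N_{T+1})`, `N' = (N_0−1, N_1+N_2, N_3, …, N_{T+1})` and
`N'' = (N_0, N_1+N_2−1, N_3, …, N_{T+1})`:
(i)  `c^{(T)}_{0,N} = c^{(T−1)}_{0,N''} · γ(N_0, N_0+N_1)`;
(ii) `c^{(T)}_{u,N} = c^{(T−1)}_{u−1,N'} + γ(N_0, N_0+N_1) · c^{(T−1)}_{u,N''}`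
for `1 ≤ u ≤ T−1`. -/
theorem cCoeff_recursion {R : Type*} [CommRing R] (γ : ℤ → ℤ → R)
    (T : ℕ) (hT : 1 ≤ T) (N : ℕ → ℕ) :
    (cCoeff γ (fun i => (N i : ℤ)) 0 T
        = cCoeff γ
            (fun i => if i = 0 then (N 0 : ℤ)
              else if i = 1 then (N 1 : ℤ) + (N 2 : ℤ) - 1 else (N (i + 1) : ℤ))
            0 (T - 1) * γ (N 0) ((N 0 : ℤ) + (N 1 : ℤ))) ∧
    (∀ u : ℕ, 1 ≤ u → u ≤ T - 1 →
      cCoeff γ (fun i => (N i : ℤ)) u T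
        = cCoeff γ
            (fun i => if i = 0 then (N 0 : ℤ) - 1
              else if i = 1 then (N 1 : ℤ) + (N 2 : ℤ) else (N (i + 1) : ℤ))
            (u - 1) (T - 1)
          + γ (N 0) ((N 0 : ℤ) + (N 1 : ℤ)) *
            cCoeff γ
              (fun i => if i = 0 then (N 0 : ℤ)
                else if i = 1 then (N 1 : ℤ) + (N 2 : ℤ) - 1 else (N (i + 1) : ℤ))
              u (T - 1)) := by
  constructor
  · obtain ⟨m, rfl⟩ : ∃ m, T = m + 1 := ⟨T - 1, by omega⟩
    rw [cCoeff_eq_sumMonotoneProd, cCoeff_eq_sumMonotoneProd, Nat.add_sub_cancel, Nat.sub_zero,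
      Nat.sub_zero, sumMonotoneProd_succ_zero, cFactor_last γ (by omega)]
    congr 1
    exact sumMonotoneProd_congr fun p hp r hr =>
      (cFactor_merge γ (by simp) (by simp only [↓reduceIte, one_ne_zero]; ring) (by simp)
        (by omega)).symm
  · intro u hu hu'
    obtain ⟨v, rfl⟩ : ∃ v, u = v + 1 := ⟨u - 1, by omega⟩
    obtain ⟨m, rfl⟩ : ∃ m, T = v + m + 2 := ⟨T - v - 2, by omega⟩
    rw [cCoeff_eq_sumMonotoneProd, cCoeff_eq_sumMonotoneProd, cCoeff_eq_sumMonotoneProd,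
      show v + m + 2 - (v + 1) = m + 1 by omega, show v + m + 2 - 1 = v + m + 1 by omega,
      Nat.add_sub_cancel, show v + m + 1 - v = m + 1 by omega,
      show v + m + 1 - (v + 1) = m by omega, sumMonotoneProd_succ_succ,
      cFactor_last γ (by omega), mul_comm]
    congr 1
    · exact sumMonotoneProd_congr fun p hp r hr =>
        (cFactor_merge γ (by simp only [↓reduceIte, Nat.cast_add, Nat.cast_one]; ring)
          (by simp only [↓reduceIte, one_ne_zero]; ring) (by simp) (by omega)).symm
    · congr 1
      exact sumMonotoneProd_congr fun p hp r hr =>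
        (cFactor_merge γ (by simp) (by simp only [↓reduceIte, one_ne_zero]; ring) (by simp)
          (by omega)).symm
end
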